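/- arXiv:1109.5416 — 2 statements merged into one kernel-verified Lean document; each statement's English description precedes it below -/
import Mathlib

section
/- Let K be a finite nonempty set of states, A an alphabet, and δ : K → K → Language A a transition matrix whose entries are formal languages over A. Define the one-step relation Step on K × (List A) by Step (k₀, w) (k₁, w') ↔ ∃ u ∈ δ k₀ k₁, w' = w ++ u, and let Stepⁿ denote the n-fold relational composition of Step (Step⁰ being equality). Let δⁿ denote the n-th matrix power of δ, using matrix multiplication over the semiring of languages (entrywise (M·N)[i,k] = ⋃_{j∈K} M[i,j]·N[j,k] with language concatenation, and δ⁰ the identity matrix with unit language {ε} on the diagonal and the empty language elsewhere). Then for every n ∈ ℕ, every x, y ∈ K, and all words v, w ∈ List A: Stepⁿ (x, v) (y, w) holds if and only if there exists u ∈ (δⁿ)[x,y] with w = v ++ u. -/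
/-- The n-fold composition of a relation: `relPow R 0` is equality and
`relPow R (n+1)` is `relPow R n` followed by one more `R`-step. -/
def relPow {α : Type*} (R : α → α → Prop) : ℕ → α → α → Prop
  | 0 => Eq
  | n + 1 => Relation.Comp (relPow R n) R

/-- One-step relation of an FSM with transition matrix `δ` on configurations
`(k, w) : K × List A`: a transition from `(k₀, w)` to `(k₁, w ++ u)` consumes
a word `u ∈ δ[k₀,k₁]`. -/
def fsmStep {K A : Type*} (δ : Matrix K K (Language A)) :
    K × List A → K × List A → Prop :=
  fun c c' => ∃ u ∈ δ c.1 c'.1, c'.2 = c.2 ++ u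

namespace Language

variable {α : Type*}

theorem mem_sum {ι : Type*} (s : Finset ι) (f : ι → Language α) (x : List α) :
    x ∈ ∑ i ∈ s, f i ↔ ∃ i ∈ s, x ∈ f i := by
  classical
  induction s using Finset.induction with
  | empty => simp [notMem_zero]
  | insert _ _ h ih => simp [Finset.sum_insert h, mem_add, ih]

theorem mem_matrix_mul_apply {l m n : Type*} [Fintype m] (M : Matrix l m (Language α))
    (N : Matrix m n (Language α)) (i : l) (k : n) (x : List α) :
    x ∈ (M * N) i k ↔ ∃ j, ∃ a ∈ M i j, ∃ b ∈ N j k, a ++ b = x := by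
  simp only [Matrix.mul_apply, mem_sum, Finset.mem_univ, true_and, mem_mul]

theorem mem_matrix_one_apply {n : Type*} [DecidableEq n] (i j : n) (x : List α) :
    x ∈ (1 : Matrix n n (Language α)) i j ↔ i = j ∧ x = [] := by
  by_cases h : i = j <;> simp [Matrix.one_apply, h, mem_one, notMem_zero]

end Language

theorem fsm_segment_iff_matrix_power_general {K A : Type*} [Fintype K] [DecidableEq K]
    (δ : Matrix K K (Language A)) :
    ∀ (n : ℕ) (x y : K) (v w : List A),
      relPow (fsmStep δ) n (x, v) (y, w) ↔ ∃ u ∈ (δ ^ n) x y, w = v ++ u := by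
  intro n
  induction n with
  | zero =>
    intro x y v w
    simp [relPow, Language.mem_matrix_one_apply, eq_comm]
  | succ n ih =>
    intro x y v w
    rw [pow_succ]
    constructor
    · rintro ⟨⟨z, w'⟩, hn, u₂, hu₂, rfl⟩
      obtain ⟨u₁, hu₁, rfl⟩ := (ih x z v w').mp hn
      exact ⟨u₁ ++ u₂, (Language.mem_matrix_mul_apply ..).2 ⟨z, u₁, hu₁, u₂, hu₂, rfl⟩,
        List.append_assoc ..⟩
    · rintro ⟨u, hu, rfl⟩
      obtain ⟨z, a, ha, b, hb, rfl⟩ := (Language.mem_matrix_mul_apply ..).1 hu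
      exact ⟨(z, v ++ a), (ih x z v (v ++ a)).2 ⟨a, ha, rfl⟩, b, hb,
        (List.append_assoc ..).symm⟩

theorem fsm_segment_iff_matrix_power {K A : Type*} [Fintype K] [DecidableEq K]
    [Nonempty K] (δ : Matrix K K (Language A)) :
    ∀ (n : ℕ) (x y : K) (v w : List A),
      relPow (fsmStep δ) n (x, v) (y, w) ↔ ∃ u ∈ (δ ^ n) x y, w = v ++ u :=
  fsm_segment_iff_matrix_power_general δ
end

section
/- For formal languages L, M over an alphabet A (elements of Mathlib's Language A, a semiring with union as addition, concatenation as multiplication, and Kleene star L∗ = ⋃_{n∈ℕ} Lⁿ), the denesting identity holds: (L + M)∗ = (L∗ * M)∗ * L∗. -/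
/-!
`(a∗ * b)∗ * a∗` contains `1` and is closed under right multiplication by `a` and by `b`
(a trailing `b` turns the final block `a∗` into one more factor `a∗ * b`), so by star induction it
contains `(a + b)∗`. Conversely, `a∗` and `a∗ * b` lie in `(a + b)∗`, which is closed under
multiplication and star.
-/

open Computability

section KleeneAlgebra

variable {α : Type*} [KleeneAlgebra α]

theorem kstar_add_le_kstar_mul_mul_kstar (a b : α) : (a + b)∗ ≤ (a∗ * b)∗ * a∗ := by
  apply kstar_le_of_mul_le_left (one_le_mul one_le_kstar one_le_kstar)
  have closed_a : (a∗ * b)∗ * a∗ * a ≤ (a∗ * b)∗ * a∗ := by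
    grw [mul_assoc, kstar_mul_le_kstar]
  have closed_b : (a∗ * b)∗ * a∗ * b ≤ (a∗ * b)∗ * a∗ :=
    calc (a∗ * b)∗ * a∗ * b = (a∗ * b)∗ * (a∗ * b) := mul_assoc _ _ _
      _ ≤ (a∗ * b)∗ := kstar_mul_le_kstar
      _ ≤ (a∗ * b)∗ * a∗ := le_mul_of_one_le_right' one_le_kstar
  rw [mul_add]
  exact add_le closed_a closed_b

theorem kstar_mul_mul_kstar_le_kstar_add (a b : α) : (a∗ * b)∗ * a∗ ≤ (a + b)∗ := by
  have ha : a∗ ≤ (a + b)∗ := kstar_mono le_self_add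
  have hab : a∗ * b ≤ (a + b)∗ :=
    calc a∗ * b ≤ (a + b)∗ * (a + b)∗ := mul_le_mul' ha (le_add_self.trans le_kstar)
      _ = (a + b)∗ := kstar_mul_kstar _
  calc (a∗ * b)∗ * a∗ ≤ (a + b)∗∗ * (a + b)∗ := mul_le_mul' (kstar_mono hab) ha
    _ = (a + b)∗ := by rw [kstar_idem, kstar_mul_kstar]

theorem kstar_add (a b : α) : (a + b)∗ = (a∗ * b)∗ * a∗ :=
  (kstar_add_le_kstar_mul_mul_kstar a b).antisymm (kstar_mul_mul_kstar_le_kstar_add a b)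

end KleeneAlgebra

theorem language_star_denesting {A : Type*} (L M : Language A) :
    (L + M)∗ = (L∗ * M)∗ * L∗ :=
  kstar_add L M
end
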